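/- arXiv:1506.07435 — 6 statements merged into one kernel-verified Lean document; each statement's English description precedes it below -/
import Mathlib

section
/- There does not exist a continuous family h : ℝ → Matrix (Fin 2) (Fin 2) ℂ of self-adjoint matrices which is ℤ-periodic, satisfies the CS symmetry (entrywise complex conjugate of h(k) equals h(-k)), and such that exp(i h(k)) equals the rotation matrix β(k) = [[cos(2πk), sin(2πk)], [−sin(2πk), cos(2πk)]] for all k ∈ ℝ. -/
/-!
Where `sin (2πk) ≠ 0`, the rotation `β(k)` has the distinct eigenvalues `e^{±2πik}` with
eigenvectors `(1, ±i)`. Any logarithm `i h(k)` commutes with `β(k)`, so it is diagonal in that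
eigenbasis, and its first diagonal entry `i x(k)` satisfies `e^{i x(k)} = e^{2πik}`. Hence the
continuous function `x(k) - 2πk` lies in the discrete closed set `2πℤ` on a dense set of `k`, so
everywhere, so it is constant; but periodicity of `h` makes it drop by `2π` from `k = 0` to `k = 1`.
-/

open Matrix Real

open Set in
theorem PreconnectedSpace.constant_of_mapsTo_of_dense {X Y : Type*} [TopologicalSpace X]
    [PreconnectedSpace X] [TopologicalSpace Y] {T : Set Y} (hT : IsDiscrete T)
    (hTc : IsClosed T) {f : X → Y} (hf : Continuous f) {s : Set X} (hs : Dense s)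
    (hfs : MapsTo f s T) (x y : X) : f x = f y := by
  have hmaps : MapsTo f univ T := fun z _ ↦
    (hTc.preimage hf).closure_subset_iff.2 hfs (hs.closure_eq ▸ mem_univ z)
  exact isPreconnected_univ.constant_of_mapsTo hT hf.continuousOn hmaps trivial trivial

theorem dense_setOf_sin_two_pi_mul_ne_zero : Dense {k : ℝ | sin (2 * π * k) ≠ 0} := by
  refine Set.Countable.dense_compl ℝ ((Set.countable_range fun n : ℤ ↦ (n : ℝ) / 2).mono ?_)
  intro k (hk : sin (2 * π * k) = 0)
  obtain ⟨n, hn⟩ := Real.sin_eq_zero_iff.1 hk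
  have : (n : ℝ) = 2 * k := mul_right_cancel₀ pi_ne_zero (by linear_combination hn)
  exact ⟨n, by linarith⟩

theorem Matrix.exp_apply_self_of_exp_eq_diagonal {n 𝕂 : Type*} [Fintype n] [DecidableEq n]
    [NormedField 𝕂] [NormedAlgebra ℚ 𝕂] [CompleteSpace 𝕂] {M : Matrix n n 𝕂} {d : n → 𝕂}
    (hd : Function.Injective d) (h : NormedSpace.exp M = diagonal d) (i : n) :
    NormedSpace.exp (M i i) = d i := by
  have hcomm : M * diagonal d = diagonal d * M := h ▸ (Commute.refl M).exp_right.eq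
  have hdiag : M.IsDiag := fun i j hij ↦ by
    have := congrFun₂ hcomm i j
    rw [mul_diagonal, diagonal_mul] at this
    have : (d j - d i) * M i j = 0 := by linear_combination this
    exact (mul_eq_zero.1 this).resolve_left (sub_ne_zero.2 (hd.ne (Ne.symm hij)))
  rw [hdiag.diagonal_diag.symm, exp_diagonal] at h
  simpa using congrFun₂ h i i

noncomputable def rotationMatrix (θ : ℝ) : Matrix (Fin 2) (Fin 2) ℂ :=
  !![(cos θ : ℂ), (sin θ : ℂ); (-(sin θ) : ℂ), (cos θ : ℂ)]

def rotationEigenbasis : Matrix (Fin 2) (Fin 2) ℂ := !![1, 1; Complex.I, -Complex.I]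

theorem isUnit_det_rotationEigenbasis : IsUnit rotationEigenbasis.det := by
  rw [isUnit_iff_ne_zero]
  norm_num [rotationEigenbasis, det_fin_two_of, Complex.ext_iff]

theorem rotationMatrix_mul_rotationEigenbasis (θ : ℝ) :
    rotationMatrix θ * rotationEigenbasis =
      rotationEigenbasis * diagonal ![cos θ + sin θ * Complex.I, cos θ - sin θ * Complex.I] := by
  ext i j
  fin_cases i <;> fin_cases j <;>
    simp [rotationMatrix, rotationEigenbasis, mul_apply, Fin.sum_univ_two, Complex.ext_iff]

theorem inv_rotationEigenbasis_mul_rotationMatrix_mul (θ : ℝ) :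
    rotationEigenbasis⁻¹ * rotationMatrix θ * rotationEigenbasis =
      diagonal ![cos θ + sin θ * Complex.I, cos θ - sin θ * Complex.I] := by
  rw [mul_assoc, rotationMatrix_mul_rotationEigenbasis,
    nonsing_inv_mul_cancel_left _ _ isUnit_det_rotationEigenbasis]

theorem injective_rotationEigenvalues {θ : ℝ} (hθ : sin θ ≠ 0) :
    Function.Injective ![cos θ + sin θ * Complex.I, cos θ - sin θ * Complex.I] := by
  refine injective_pair_iff_ne.2 fun heq ↦ hθ ?_
  have him := congrArg Complex.im heq
  simp only [Complex.add_im, Complex.sub_im, Complex.mul_im, Complex.ofReal_re,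
    Complex.ofReal_im, Complex.I_re, Complex.I_im] at him
  linarith

theorem mem_zmultiples_of_exp_eq_rotationMatrix {H : Matrix (Fin 2) (Fin 2) ℂ} {θ : ℝ}
    (hθ : sin θ ≠ 0) (h : NormedSpace.exp (Complex.I • H) = rotationMatrix θ) :
    (rotationEigenbasis⁻¹ * H * rotationEigenbasis) 0 0 - θ ∈
      AddSubgroup.zmultiples (2 * π : ℂ) := by
  set P := rotationEigenbasis
  have hdiag : NormedSpace.exp (Complex.I • (P⁻¹ * H * P)) =
      diagonal ![cos θ + sin θ * Complex.I, cos θ - sin θ * Complex.I] := by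
    rw [← Matrix.smul_mul, ← Matrix.mul_smul,
      exp_conj' P _ ((isUnit_iff_isUnit_det P).2 isUnit_det_rotationEigenbasis), h,
      inv_rotationEigenbasis_mul_rotationMatrix_mul]
  have hexp := exp_apply_self_of_exp_eq_diagonal (injective_rotationEigenvalues hθ) hdiag 0
  rw [Matrix.smul_apply, smul_eq_mul, ← Complex.exp_eq_exp_ℂ, Matrix.cons_val_zero,
    Complex.ofReal_cos, Complex.ofReal_sin, ← Complex.exp_mul_I,
    Complex.exp_eq_exp_iff_exists_int] at hexp
  obtain ⟨n, hn⟩ := hexp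
  refine AddSubgroup.mem_zmultiples_iff.2 ⟨n, ?_⟩
  rw [zsmul_eq_mul]
  apply mul_left_cancel₀ Complex.I_ne_zero
  linear_combination -hn

theorem stmt_7 :
    ¬ ∃ h : ℝ → Matrix (Fin 2) (Fin 2) ℂ,
      Continuous h ∧
      (∀ k, (h k).IsHermitian) ∧
      (∀ k, h (k + 1) = h k) ∧
      (∀ k, (h k).map (starRingEnd ℂ) = h (-k)) ∧
      (∀ k : ℝ, NormedSpace.exp (Complex.I • h k) =
        !![(Real.cos (2 * π * k) : ℂ), (Real.sin (2 * π * k) : ℂ);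
           (-(Real.sin (2 * π * k)) : ℂ), (Real.cos (2 * π * k) : ℂ)]) := by
  rintro ⟨h, hcont, -, hper, -, hexp⟩
  set P := rotationEigenbasis
  set g : ℝ → ℂ := fun k ↦ (P⁻¹ * h k * P) 0 0 - ((2 * π * k : ℝ) : ℂ)
  have hg : Continuous g := by fun_prop
  have hconst : g 1 = g 0 :=
    PreconnectedSpace.constant_of_mapsTo_of_dense
      (isDiscrete_iff_discreteTopology.2 (NormedSpace.discreteTopology_zmultiples _))
      AddSubgroup.isClosed_of_discrete hg dense_setOf_sin_two_pi_mul_ne_zero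
      (fun k hk ↦ mem_zmultiples_of_exp_eq_rotationMatrix hk (hexp k)) 1 0
  have hshift : g 1 = g 0 - 2 * π := by
    have h1 : h 1 = h 0 := by simpa using hper 0
    simp only [g, h1]
    push_cast
    ring
  have : (2 * π : ℂ) = 0 := by linear_combination hshift - hconst
  exact pi_ne_zero (by exact_mod_cast (mul_eq_zero.1 this).resolve_left two_ne_zero)
end

section
/- Let P, Q be orthogonal projections on a Hilbert space with ‖P − Q‖ < 1. Then the Sz.-Nagy operator U := (QP + (Id − Q)(Id − P)) · (Id − (P − Q)²)^{-1/2} is unitary and intertwines the projections: Q·U = U·P. -/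
/-!
The element `V = QP + (1 - Q)(1 - P)` already intertwines the projections, `QV = QP = VP`, and a
direct computation with `P² = P`, `Q² = Q` gives `V⋆V = VV⋆ = 1 - (P - Q)²`. This element is
invertible because `‖P - Q‖ < 1`, so `V` is an invertible normal element, and the unitary factor
`V (V⋆V)^{-1/2}` of its polar decomposition still intertwines `P` and `Q`, since `P` commutes
with `(P - Q)²` and hence with every real power of `1 - (P - Q)²`.
-/

open CFC

section Ring

variable {R : Type*} [Ring R]

def szNagy (p q : R) : R := q * p + (1 - q) * (1 - p)

variable {p q : R}

lemma IsIdempotentElem.mul_szNagy (hq : IsIdempotentElem q) (p : R) :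
    q * szNagy p q = q * p := by
  simp only [szNagy, mul_add, mul_sub, sub_mul, mul_one, ← mul_assoc, hq.eq]
  noncomm_ring

lemma IsIdempotentElem.szNagy_mul (hp : IsIdempotentElem p) (q : R) :
    szNagy p q * p = q * p := by
  simp only [szNagy, add_mul, mul_sub, sub_mul, one_mul, mul_one, mul_assoc, hp.eq]
  noncomm_ring

lemma szNagy_mul_szNagy (hp : IsIdempotentElem p) (hq : IsIdempotentElem q) :
    szNagy q p * szNagy p q = 1 - (p - q) ^ 2 := by
  have hq' (x : R) : q * (q * x) = q * x := by rw [← mul_assoc, hq.eq]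
  simp only [szNagy, sq, mul_add, add_mul, mul_sub, sub_mul, mul_one, one_mul, mul_assoc, hp.eq,
    hq.eq, hq']
  noncomm_ring

lemma IsIdempotentElem.commute_sub_sq (hp : IsIdempotentElem p) (hq : IsIdempotentElem q) :
    Commute p ((p - q) ^ 2) := by
  have hp' (x : R) : p * (p * x) = p * x := by rw [← mul_assoc, hp.eq]
  simp only [Commute, SemiconjBy, sq, mul_sub, sub_mul, mul_assoc, hp.eq, hq.eq, hp']
  noncomm_ring

end Ring

lemma IsSelfAdjoint.star_szNagy {R : Type*} [Ring R] [StarRing R] {p q : R}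
    (hp : IsSelfAdjoint p) (hq : IsSelfAdjoint q) : star (szNagy p q) = szNagy q p := by
  simp [szNagy, star_sub, hp.star_eq, hq.star_eq]

lemma IsUnit.mul_star_mul_self_rpow_neg_half_mem_unitary {A : Type*} [CStarAlgebra A] [PartialOrder A]
    [StarOrderedRing A] {v : A} (hv : IsUnit v) :
    v * (star v * v) ^ (-(1 / 2) : ℝ) ∈ unitary A := by
  set d := star v * v
  have hd : IsUnit d := hv.star.mul hv
  have hd₀ : 0 ≤ d := star_mul_self_nonneg v
  refine (hv.mul (hd.cfcRpow _)).mem_unitary_of_star_mul_self ?_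
  calc star (v * d ^ (-(1 / 2) : ℝ)) * (v * d ^ (-(1 / 2) : ℝ))
      = d ^ (-(1 / 2) : ℝ) * d ^ (1 : ℝ) * d ^ (-(1 / 2) : ℝ) := by
        rw [star_mul, rpow_nonneg.isSelfAdjoint.star_eq, rpow_one d]
        simp only [d, mul_assoc]
    _ = d ^ (-(1 / 2) + 1 + -(1 / 2) : ℝ) := by rw [rpow_add hd, rpow_add hd]
    _ = 1 := by norm_num [rpow_zero d]

theorem stmt_8 {H : Type*} [NormedAddCommGroup H] [InnerProductSpace ℂ H] [CompleteSpace H]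
    (P Q : H →L[ℂ] H)
    (hP : IsSelfAdjoint P) (hP2 : P * P = P)
    (hQ : IsSelfAdjoint Q) (hQ2 : Q * Q = Q)
    (hnorm : ‖P - Q‖ < 1) :
    (Q * P + (1 - Q) * (1 - P)) * CFC.rpow (1 - (P - Q) ^ 2) (-(1/2) : ℝ) ∈
      unitary (H →L[ℂ] H) ∧
    Q * ((Q * P + (1 - Q) * (1 - P)) * CFC.rpow (1 - (P - Q) ^ 2) (-(1/2) : ℝ)) =
      ((Q * P + (1 - Q) * (1 - P)) * CFC.rpow (1 - (P - Q) ^ 2) (-(1/2) : ℝ)) * P := by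
  change szNagy P Q * _ ∈ _ ∧ Q * (szNagy P Q * _) = szNagy P Q * _ * P
  have hPi : IsIdempotentElem P := hP2
  have hQi : IsIdempotentElem Q := hQ2
  have hstar : star (szNagy P Q) * szNagy P Q = 1 - (P - Q) ^ 2 := by
    rw [hP.star_szNagy hQ, szNagy_mul_szNagy hPi hQi]
  have hstar' : szNagy P Q * star (szNagy P Q) = 1 - (P - Q) ^ 2 := by
    rw [hP.star_szNagy hQ, szNagy_mul_szNagy hQi hPi, ← neg_sub P Q, neg_sq]
  have hD : IsUnit (1 - (P - Q) ^ 2) := isUnit_one_sub_of_norm_lt_one <|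
    (norm_pow_le' _ two_pos).trans_lt (pow_lt_one₀ (norm_nonneg _) hnorm two_ne_zero)
  have hnormal : Commute (szNagy P Q) (star (szNagy P Q)) := hstar'.trans hstar.symm
  have hV : IsUnit (szNagy P Q) := (hnormal.isUnit_mul_iff.mp (hstar' ▸ hD)).1
  have hPT : Commute (CFC.rpow (1 - (P - Q) ^ 2) (-(1/2) : ℝ)) P :=
    ((Commute.one_left P).sub_left (hPi.commute_sub_sq hQi).symm).cfc_nnreal _
  refine ⟨by simpa [hstar] using hV.mul_star_mul_self_rpow_neg_half_mem_unitary, ?_⟩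
  rw [← mul_assoc, hQi.mul_szNagy, ← hPi.szNagy_mul, mul_assoc, ← hPT.eq, mul_assoc]
end

section
/- Let τ be a unitary operator on a complex Hilbert space and K an anti-unitary involution with Kτ = τ⁻¹K. Let M be the self-adjoint operator with spectrum in (−π, π] such that τ = exp(iM), obtained via the spectral theorem. Then KMK = M, and the family u_k := exp(ikM), k ∈ ℝ, satisfies: u₀ = Id, u_k u_{k'} = u_{k+k'}, u_k* = u_{-k}, u₁ = τ, and K u_k = u_{-k} K for all k. -/
/-!
Conjugation `T ↦ K T K` is a continuous, conjugate-linear ring automorphism of `B(H)` that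
commutes with adjoints and with `exp`, and it sends `τ = exp(iM)` to `τ⋆`. Hence `KMK` is
self-adjoint, has its spectrum in `(-π, π]`, and `exp(i KMK) = τ`. On self-adjoint operators
with spectrum in `(-π, π]` the map `A ↦ exp(iA)` is injective, because `A = arg(exp(iA))` in
the functional calculus: `arg` is continuous on the compact set `exp(iσ(A))`, being there the
inverse of a continuous injection. So `KMK = M`, and the rest is the group law of `exp`.
-/

open Real ComplexConjugate

namespace ContinuousLinearMap
variable {E : Type*} [NormedAddCommGroup E] [NormedSpace ℂ E]

def antilinearConj (J : E →L⋆[ℂ] E) (hJ : Function.Involutive J) :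
    (E →L[ℂ] E) ≃+* (E →L[ℂ] E) where
  toFun T := J.comp (T.comp J)
  invFun T := J.comp (T.comp J)
  left_inv T := by ext x; simp [hJ _]
  right_inv T := by ext x; simp [hJ _]
  map_mul' S T := by ext x; simp [hJ _]
  map_add' S T := by ext x; simp

variable (J : E →L⋆[ℂ] E) (hJ : Function.Involutive J)

@[simp]
theorem antilinearConj_apply (T : E →L[ℂ] E) (x : E) : antilinearConj J hJ T x = J (T (J x)) :=
  rfl

theorem antilinearConj_smul (c : ℂ) (T : E →L[ℂ] E) :
    antilinearConj J hJ (c • T) = conj c • antilinearConj J hJ T := by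
  ext x; simp

theorem continuous_antilinearConj : Continuous (antilinearConj J hJ) :=
  AddMonoidHomClass.continuous_of_bound _ (‖J‖ * ‖J‖) fun T =>
    calc ‖J.comp (T.comp J)‖ ≤ ‖J‖ * (‖T‖ * ‖J‖) :=
          (opNorm_comp_le _ _).trans
            (mul_le_mul_of_nonneg_left (opNorm_comp_le _ _) (norm_nonneg _))
      _ = ‖J‖ * ‖J‖ * ‖T‖ := by ring

theorem antilinearConj_exp_smul [CompleteSpace E] (c : ℂ) (T : E →L[ℂ] E) :
    antilinearConj J hJ (NormedSpace.exp (c • T)) =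
      NormedSpace.exp (conj c • antilinearConj J hJ T) := by
  rw [NormedSpace.map_exp_of_mem_ball (𝕂 := ℂ) _ (continuous_antilinearConj J hJ),
    antilinearConj_smul]
  simp [NormedSpace.expSeries_radius_eq_top]

theorem mem_spectrum_antilinearConj_iff (T : E →L[ℂ] E) (z : ℂ) :
    z ∈ spectrum ℂ (antilinearConj J hJ T) ↔ conj z ∈ spectrum ℂ T := by
  have h : algebraMap ℂ (E →L[ℂ] E) z - antilinearConj J hJ T =
      antilinearConj J hJ (algebraMap ℂ (E →L[ℂ] E) (conj z) - T) := by
    simp only [map_sub, Algebra.algebraMap_eq_smul_one, antilinearConj_smul, map_one,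
      RCLike.conj_conj]
  rw [spectrum.mem_iff, spectrum.mem_iff, h, isUnit_map_iff]

end ContinuousLinearMap

open Set in
theorem IsCompact.continuousOn_image_of_leftInvOn {α β : Type*} [TopologicalSpace α]
    [TopologicalSpace β] [T2Space β] {f : β → α} {g : α → β} {t : Set α} (ht : IsCompact t) (hg : ContinuousOn g t)
    (hfg : LeftInvOn f g t) : ContinuousOn f (g '' t) := by
  refine continuousOn_iff_isClosed.mpr fun C hC => ⟨g '' (t ∩ C), ?_, ?_⟩
  · exact ((ht.inter_right hC).image_of_continuousOn (hg.mono inter_subset_left)).isClosed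
  · ext y
    constructor
    · rintro ⟨hy, x, hx, rfl⟩
      exact ⟨⟨x, ⟨hx, by rwa [mem_preimage, hfg hx] at hy⟩, rfl⟩, x, hx, rfl⟩
    · rintro ⟨⟨x, ⟨hx, hxC⟩, rfl⟩, -⟩
      exact ⟨by rwa [mem_preimage, hfg hx], x, hx, rfl⟩

section CFC
variable {R A : Type*} {p : A → Prop} [CommSemiring R] [StarRing R] [MetricSpace R]
  [IsTopologicalSemiring R] [ContinuousStar R] [TopologicalSpace A] [Ring A] [StarRing A]
  [Algebra R A] [ContinuousFunctionalCalculus R A p] [ContinuousMap.UniqueHom R A]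

theorem cfc_cfc_of_leftInvOn {f g : R → R} {s : Set R} (hfg : Set.LeftInvOn f g s) {a : A}
    (hs : spectrum R a ⊆ s) (hg : ContinuousOn g (spectrum R a) := by cfc_cont_tac)
    (ha : p a := by cfc_tac) : cfc f (cfc g a) = a := by
  have hf : ContinuousOn f (g '' spectrum R a) :=
    IsCompact.continuousOn_image_of_leftInvOn
      (ContinuousFunctionalCalculus.isCompact_spectrum a) hg (hfg.mono hs)
  rw [← cfc_comp' f g a, cfc_congr (fun z hz => hfg (hs hz)), cfc_id' R a]

theorem eq_of_cfc_eq_of_leftInvOn {f g : R → R} {s : Set R} (hfg : Set.LeftInvOn f g s) {a b : A}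
    (has : spectrum R a ⊆ s) (hbs : spectrum R b ⊆ s) (h : cfc g a = cfc g b)
    (hga : ContinuousOn g (spectrum R a) := by cfc_cont_tac)
    (hgb : ContinuousOn g (spectrum R b) := by cfc_cont_tac)
    (ha : p a := by cfc_tac) (hb : p b := by cfc_tac) : a = b := by
  rw [← cfc_cfc_of_leftInvOn hfg has, h, cfc_cfc_of_leftInvOn hfg hbs]

end CFC

theorem Complex.leftInvOn_arg_exp_mul_I :
    Set.LeftInvOn (fun w => (arg w : ℂ)) (fun z => exp (I * z))
      {z | z.im = 0 ∧ z.re ∈ Set.Ioc (-π) π} := by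
  rintro z ⟨him, hre⟩
  have hz : z = (z.re : ℂ) := Complex.ext rfl (by simp [him])
  rw [hz]
  dsimp only
  rw [mul_comm, arg_exp_mul_I, (toIocMod_eq_self _).mpr (by rwa [show -π + 2 * π = π by ring])]

section InnerProduct
variable {H : Type*} [NormedAddCommGroup H] [InnerProductSpace ℂ H]

def antilinearCLMOfInner (K : H → H) (hadd : ∀ x y, K (x + y) = K x + K y)
    (hsmul : ∀ (c : ℂ) (x : H), K (c • x) = (starRingEnd ℂ c) • K x)
    (hanti : ∀ x y, inner ℂ (K x) (K y) = (inner ℂ y x : ℂ)) : H →L⋆[ℂ] H :=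
  LinearMap.mkContinuous { toFun := K, map_add' := hadd, map_smul' := hsmul } 1 fun x => by
    rw [one_mul, LinearMap.coe_mk, AddHom.coe_mk, @norm_eq_sqrt_re_inner ℂ, hanti,
      ← @norm_eq_sqrt_re_inner ℂ]

theorem ContinuousLinearMap.star_antilinearConj [CompleteSpace H] (J : H →L⋆[ℂ] H)
    (hJ : Function.Involutive J) (hJinner : ∀ x y, inner ℂ (J x) (J y) = (inner ℂ y x : ℂ))
    (T : H →L[ℂ] H) : star (antilinearConj J hJ T) = antilinearConj J hJ (star T) := by
  rw [star_eq_adjoint, star_eq_adjoint, eq_comm, eq_adjoint_iff]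
  intro x y
  calc inner ℂ (J (adjoint T (J x))) y = inner ℂ (J (adjoint T (J x))) (J (J y)) := by rw [hJ y]
    _ = inner ℂ (J y) (adjoint T (J x)) := hJinner _ _
    _ = inner ℂ (T (J y)) (J x) := adjoint_inner_right _ _ _
    _ = inner ℂ (J (J x)) (J (T (J y))) := (hJinner _ _).symm
    _ = inner ℂ x (J (T (J y))) := by rw [hJ x]

end InnerProduct

section Exp
variable {A : Type*} [NormedRing A] [NormedAlgebra ℂ A]

theorem exp_smul_mul_exp_smul [CompleteSpace A] (a : A) (s t : ℂ) :
    NormedSpace.exp (s • a) * NormedSpace.exp (t • a) = NormedSpace.exp ((s + t) • a) := by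
  rw [← NormedSpace.exp_add_of_commute_of_mem_ball (𝕂 := ℂ)
    (((Commute.refl a).smul_left _).smul_right _), add_smul] <;>
  simp [NormedSpace.expSeries_radius_eq_top]

theorem IsSelfAdjoint.star_exp_smul [StarRing A] [StarModule ℂ A] [ContinuousStar A] {a : A}
    (ha : IsSelfAdjoint a) (c : ℂ) :
    star (NormedSpace.exp (c • a)) = NormedSpace.exp (star c • a) := by
  rw [NormedSpace.star_exp, star_smul, ha.star_eq]

end Exp

section Logarithm
variable {A : Type*} [CStarAlgebra A]

theorem cfc_exp_I_mul {a : A} (ha : IsStarNormal a) :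
    cfc (fun z => Complex.exp (Complex.I * z)) a = NormedSpace.exp (Complex.I • a) := by
  rw [← CFC.complex_exp_eq_normedSpace_exp]
  exact cfc_comp_smul Complex.I Complex.exp a

theorem IsSelfAdjoint.eq_of_exp_I_smul_eq {a b : A} (ha : IsSelfAdjoint a) (hb : IsSelfAdjoint b)
    (has : spectrum ℂ a ⊆ {z | z.im = 0 ∧ z.re ∈ Set.Ioc (-π) π})
    (hbs : spectrum ℂ b ⊆ {z | z.im = 0 ∧ z.re ∈ Set.Ioc (-π) π})
    (h : NormedSpace.exp (Complex.I • a) = NormedSpace.exp (Complex.I • b)) : a = b := by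
  refine eq_of_cfc_eq_of_leftInvOn Complex.leftInvOn_arg_exp_mul_I has hbs ?_ (p := IsStarNormal)
  rwa [cfc_exp_I_mul ha.isStarNormal, cfc_exp_I_mul hb.isStarNormal]

open ContinuousLinearMap in
theorem IsSelfAdjoint.antilinearConj_eq_self {H : Type*} [NormedAddCommGroup H]
    [InnerProductSpace ℂ H] [CompleteSpace H] {J : H →L⋆[ℂ] H} {hJ : Function.Involutive J}
    (hJinner : ∀ x y, inner ℂ (J x) (J y) = (inner ℂ y x : ℂ)) {M : H →L[ℂ] H}
    (hM : IsSelfAdjoint M) (hspec : spectrum ℂ M ⊆ {z | z.im = 0 ∧ z.re ∈ Set.Ioc (-π) π})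
    (h : antilinearConj J hJ (NormedSpace.exp (Complex.I • M)) =
      star (NormedSpace.exp (Complex.I • M))) :
    antilinearConj J hJ M = M := by
  have hsa : IsSelfAdjoint (antilinearConj J hJ M) := by
    rw [IsSelfAdjoint, star_antilinearConj J hJ hJinner, hM.star_eq]
  refine hsa.eq_of_exp_I_smul_eq hM (fun z hz => ?_) hspec ?_
  · simpa using hspec ((mem_spectrum_antilinearConj_iff J hJ M z).mp hz)
  · calc NormedSpace.exp (Complex.I • antilinearConj J hJ M)
        = star (NormedSpace.exp (conj Complex.I • antilinearConj J hJ M)) := by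
          rw [hsa.star_exp_smul, Complex.star_def, Complex.conj_conj]
      _ = star (antilinearConj J hJ (NormedSpace.exp (Complex.I • M))) := by
          rw [antilinearConj_exp_smul]
      _ = NormedSpace.exp (Complex.I • M) := by rw [h, star_star]

end Logarithm

open ContinuousLinearMap in
theorem stmt_14_general {H : Type*} [NormedAddCommGroup H] [InnerProductSpace ℂ H] [CompleteSpace H]
    (τ : H →L[ℂ] H)
    (K : H → H)
    (hadd : ∀ x y, K (x + y) = K x + K y)
    (hsmul : ∀ (c : ℂ) (x : H), K (c • x) = (starRingEnd ℂ c) • K x)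
    (hinvol : ∀ x, K (K x) = x)
    (hanti : ∀ x y, inner ℂ (K x) (K y) = (inner ℂ y x : ℂ))
    (hKτ : ∀ x, K (τ x) = (star τ) (K x))
    (M : H →L[ℂ] H) (hM : IsSelfAdjoint M)
    (hspec : ∀ z ∈ spectrum ℂ M, z.im = 0 ∧ z.re ∈ Set.Ioc (-π) π)
    (hexp : NormedSpace.exp (Complex.I • M) = τ) :
    (∀ x, K (M x) = M (K x)) ∧
    NormedSpace.exp ((Complex.I * (0 : ℝ)) • M) = 1 ∧
    (∀ k k' : ℝ, NormedSpace.exp ((Complex.I * k) • M) *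
        NormedSpace.exp ((Complex.I * k') • M) =
        NormedSpace.exp ((Complex.I * (k + k' : ℝ)) • M)) ∧
    (∀ k : ℝ, star (NormedSpace.exp ((Complex.I * k) • M)) =
        NormedSpace.exp ((Complex.I * (-k : ℝ)) • M)) ∧
    NormedSpace.exp ((Complex.I * (1 : ℝ)) • M) = τ ∧
    (∀ (k : ℝ) (x : H), K (NormedSpace.exp ((Complex.I * k) • M) x) =
        NormedSpace.exp ((Complex.I * (-k : ℝ)) • M) (K x)) := by
  obtain ⟨J, hJK⟩ : ∃ J : H →L⋆[ℂ] H, ∀ x, J x = K x :=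
    ⟨antilinearCLMOfInner K hadd hsmul hanti, fun _ => rfl⟩
  have hJ : Function.Involutive J := fun x => by simp only [hJK, hinvol]
  have hJinner : ∀ x y, inner ℂ (J x) (J y) = (inner ℂ y x : ℂ) := by simpa only [hJK]
  have hMconj : antilinearConj J hJ M = M := hM.antilinearConj_eq_self hJinner hspec <|
    ext fun x => by simp [hexp, hJK, hKτ, hinvol]
  have hKM : ∀ x, K (M x) = M (K x) := fun x => by
    simpa [hJK, hinvol] using congrArg (fun T => T (K x)) hMconj
  refine ⟨hKM, by simp, fun k k' => ?_, fun k => ?_, by simpa using hexp, fun k x => ?_⟩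
  · rw [exp_smul_mul_exp_smul]
    push_cast
    ring_nf
  · rw [hM.star_exp_smul]
    simp
  · have h := antilinearConj_exp_smul J hJ (Complex.I * k) M
    rw [hMconj] at h
    simpa [hJK, hinvol] using congrArg (fun T => T (K x)) h

theorem stmt_14 {H : Type*} [NormedAddCommGroup H] [InnerProductSpace ℂ H] [CompleteSpace H]
    (τ : H →L[ℂ] H) (hτ : τ ∈ unitary (H →L[ℂ] H))
    (K : H → H)
    (hadd : ∀ x y, K (x + y) = K x + K y)
    (hsmul : ∀ (c : ℂ) (x : H), K (c • x) = (starRingEnd ℂ c) • K x)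
    (hinvol : ∀ x, K (K x) = x)
    (hanti : ∀ x y, inner ℂ (K x) (K y) = (inner ℂ y x : ℂ))
    (hKτ : ∀ x, K (τ x) = (star τ) (K x))
    (M : H →L[ℂ] H) (hM : IsSelfAdjoint M)
    (hspec : ∀ z ∈ spectrum ℂ M, z.im = 0 ∧ z.re ∈ Set.Ioc (-π) π)
    (hexp : NormedSpace.exp (Complex.I • M) = τ) :
    (∀ x, K (M x) = M (K x)) ∧
    NormedSpace.exp ((Complex.I * (0 : ℝ)) • M) = 1 ∧
    (∀ k k' : ℝ, NormedSpace.exp ((Complex.I * k) • M) *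
        NormedSpace.exp ((Complex.I * k') • M) =
        NormedSpace.exp ((Complex.I * (k + k' : ℝ)) • M)) ∧
    (∀ k : ℝ, star (NormedSpace.exp ((Complex.I * k) • M)) =
        NormedSpace.exp ((Complex.I * (-k : ℝ)) • M)) ∧
    NormedSpace.exp ((Complex.I * (1 : ℝ)) • M) = τ ∧
    (∀ (k : ℝ) (x : H), K (NormedSpace.exp ((Complex.I * k) • M) x) =
        NormedSpace.exp ((Complex.I * (-k : ℝ)) • M) (K x)) :=
  stmt_14_general τ K hadd hsmul hinvol hanti hKτ M hM hspec hexp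
end

section
/- Let β : ℝ → Matrix (Fin N) (Fin N) ℂ be continuous, ℤ-periodic, unitary-valued, with CS′ symmetry. Suppose there exist continuous, ℤ-periodic, self-adjoint matrix families h and h̃, both with CS symmetry, such that exp(−i h̃(k)/2)·exp(−i h(k)/2)·β(k)·exp(−i h(k)/2)·exp(−i h̃(k)/2) = Id for all k. Then u(x,k) := exp(−ix h(k))·exp(−ix h̃(k)) is unitary, ℤ-periodic in k, satisfies u(−1/2,k)⁻¹ · β(k) · u(1/2,k) = Id, and has the CS symmetry: the entrywise complex conjugate of u(x,k) equals u(−x,−k). -/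
/-! Each factor `exp (-(i x) • A)` with `A` Hermitian has a skew-adjoint exponent, hence is
unitary; entrywise conjugation commutes with `exp` and turns it into `exp (-(i (-x)) • conj A)`,
which the CS symmetry rewrites at `-k`. Since `u (-1/2) k` inverts to
`exp (-(i/2) • h' k) * exp (-(i/2) • h k)`, the boundary condition is exactly `hmain`. -/

open Matrix

namespace Matrix

theorem IsHermitian.neg_I_mul_smul_mem_skewAdjoint {n : Type*} {A : Matrix n n ℂ}
    (hA : A.IsHermitian) (x : ℝ) : (-(Complex.I * x)) • A ∈ skewAdjoint (Matrix n n ℂ) := by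
  rw [skewAdjoint.mem_iff, star_smul, star_eq_conjTranspose, hA.eq, ← neg_smul]
  simp

variable {n : Type*} [Fintype n] [DecidableEq n]

theorem exp_mem_unitary_of_mem_skewAdjoint {𝕜 : Type*} [RCLike 𝕜] {X : Matrix n n 𝕜}
    (hX : X ∈ skewAdjoint (Matrix n n 𝕜)) : NormedSpace.exp X ∈ unitary (Matrix n n 𝕜) := by
  rw [← unitaryGroup, mem_unitaryGroup_iff, star_eq_conjTranspose, ← exp_conjTranspose,
    ← star_eq_conjTranspose, skewAdjoint.mem_iff.mp hX, exp_neg]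
  exact mul_nonsing_inv _ ((isUnit_iff_isUnit_det _).mp (isUnit_exp _))

theorem exp_map_starRingEnd {𝕜 : Type*} [CommRing 𝕜] [StarRing 𝕜] [TopologicalSpace 𝕜]
    [IsTopologicalRing 𝕜] [ContinuousStar 𝕜] [Algebra ℚ 𝕜] [T2Space 𝕜] (A : Matrix n n 𝕜) :
    (NormedSpace.exp A).map (starRingEnd 𝕜) = NormedSpace.exp (A.map (starRingEnd 𝕜)) := by
  have map_eq (B : Matrix n n 𝕜) : B.map (starRingEnd 𝕜) = Bᴴᵀ := rfl
  rw [map_eq, map_eq, exp_transpose, exp_conjTranspose]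

theorem exp_neg_I_mul_smul_map_starRingEnd (A : Matrix n n ℂ) (x : ℝ) :
    (NormedSpace.exp ((-(Complex.I * x)) • A)).map (starRingEnd ℂ) =
      NormedSpace.exp ((-(Complex.I * ↑(-x))) • A.map (starRingEnd ℂ)) := by
  rw [exp_map_starRingEnd]
  congr 1
  ext i j
  simp

theorem inv_exp_neg_I_mul_smul (A : Matrix n n ℂ) (x : ℝ) :
    (NormedSpace.exp ((-(Complex.I * x)) • A))⁻¹ =
      NormedSpace.exp ((-(Complex.I * ↑(-x))) • A) := by
  rw [← exp_neg, ← neg_smul, Complex.ofReal_neg, mul_neg, neg_neg]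

end Matrix

theorem stmt_15_general {N : ℕ} (β : ℝ → Matrix (Fin N) (Fin N) ℂ)
    (h h' : ℝ → Matrix (Fin N) (Fin N) ℂ)
    (hhper : ∀ k, h (k + 1) = h k) (hh'per : ∀ k, h' (k + 1) = h' k)
    (hhsa : ∀ k, (h k).IsHermitian) (hh'sa : ∀ k, (h' k).IsHermitian)
    (hhcs : ∀ k, (h k).map (starRingEnd ℂ) = h (-k))
    (hh'cs : ∀ k, (h' k).map (starRingEnd ℂ) = h' (-k))
    (hmain : ∀ k, NormedSpace.exp ((-(Complex.I / 2)) • h' k) *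
        NormedSpace.exp ((-(Complex.I / 2)) • h k) * β k *
        NormedSpace.exp ((-(Complex.I / 2)) • h k) *
        NormedSpace.exp ((-(Complex.I / 2)) • h' k) = 1)
    (u : ℝ → ℝ → Matrix (Fin N) (Fin N) ℂ)
    (hu : ∀ x k, u x k = NormedSpace.exp ((-(Complex.I * x)) • h k) *
        NormedSpace.exp ((-(Complex.I * x)) • h' k)) :
    (∀ x k, u x k * (u x k)ᴴ = 1) ∧
    (∀ x k, u x (k + 1) = u x k) ∧
    (∀ k, (u (-(1/2)) k)⁻¹ * β k * u (1/2) k = 1) ∧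
    (∀ x k, (u x k).map (starRingEnd ℂ) = u (-x) (-k)) := by
  refine ⟨fun x k ↦ ?_, fun x k ↦ by rw [hu, hu, hhper, hh'per], fun k ↦ ?_, fun x k ↦ ?_⟩
  · have hunitary : u x k ∈ unitary _ := hu x k ▸ mul_mem
      (exp_mem_unitary_of_mem_skewAdjoint ((hhsa k).neg_I_mul_smul_mem_skewAdjoint x))
      (exp_mem_unitary_of_mem_skewAdjoint ((hh'sa k).neg_I_mul_smul_mem_skewAdjoint x))
    exact Unitary.mul_star_self_of_mem hunitary
  · have half : -(Complex.I * ((1 / 2 : ℝ) : ℂ)) = -(Complex.I / 2) := by push_cast; ring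
    rw [hu, hu, Matrix.mul_inv_rev, inv_exp_neg_I_mul_smul, inv_exp_neg_I_mul_smul, neg_neg, half]
    simpa only [mul_assoc] using hmain k
  · rw [hu, hu, Matrix.map_mul, exp_neg_I_mul_smul_map_starRingEnd,
      exp_neg_I_mul_smul_map_starRingEnd, hhcs, hh'cs]

theorem stmt_15 {N : ℕ} (β : ℝ → Matrix (Fin N) (Fin N) ℂ)
    (hβcont : Continuous β)
    (hβper : ∀ k, β (k + 1) = β k)
    (hβu : ∀ k, β k * (β k)ᴴ = 1)
    (hβcs' : ∀ k, (β k).map (starRingEnd ℂ) = (β (-k))⁻¹)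
    (h h' : ℝ → Matrix (Fin N) (Fin N) ℂ)
    (hhcont : Continuous h) (hh'cont : Continuous h')
    (hhper : ∀ k, h (k + 1) = h k) (hh'per : ∀ k, h' (k + 1) = h' k)
    (hhsa : ∀ k, (h k).IsHermitian) (hh'sa : ∀ k, (h' k).IsHermitian)
    (hhcs : ∀ k, (h k).map (starRingEnd ℂ) = h (-k))
    (hh'cs : ∀ k, (h' k).map (starRingEnd ℂ) = h' (-k))
    (hmain : ∀ k, NormedSpace.exp ((-(Complex.I / 2)) • h' k) *
        NormedSpace.exp ((-(Complex.I / 2)) • h k) * β k *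
        NormedSpace.exp ((-(Complex.I / 2)) • h k) *
        NormedSpace.exp ((-(Complex.I / 2)) • h' k) = 1)
    (u : ℝ → ℝ → Matrix (Fin N) (Fin N) ℂ)
    (hu : ∀ x k, u x k = NormedSpace.exp ((-(Complex.I * x)) • h k) *
        NormedSpace.exp ((-(Complex.I * x)) • h' k)) :
    (∀ x k, u x k * (u x k)ᴴ = 1) ∧
    (∀ x k, u x (k + 1) = u x k) ∧
    (∀ k, (u (-(1/2)) k)⁻¹ * β k * u (1/2) k = 1) ∧
    (∀ x k, (u x k).map (starRingEnd ℂ) = u (-x) (-k)) :=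
  stmt_15_general β h h' hhper hh'per hhsa hh'sa hhcs hh'cs hmain u hu
end

section
/- Let μ : ℝ → Matrix (Fin N) (Fin N) ℂ be a family of matrices with transpose(μ(k)) = μ(−k) for all k, and suppose ‖μ(k)μ(k)* − Id‖ < 1 uniformly in k, so that β(k) := (μ(k)μ(k)*)^{-1/2}·μ(k) is defined via the norm-convergent power series (1+x)^{-1/2} = Σ aₙxⁿ applied to μ(k)μ(k)* − Id. Then β(k) is unitary for every k and transpose(β(k)) = β(−k). -/
/-!
Put `X = μ μᴴ - 1` and `S = ∑ choose(-1/2, n) Xⁿ`. By Chu–Vandermonde the square of the series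
has coefficients `choose(-1, n) = (-1)ⁿ`, so `S² = ∑ (-X)ⁿ = (1 + X)⁻¹`. Since `S` is
self-adjoint and commutes with `μ μᴴ = 1 + X`, we get `β βᴴ = S (1 + X) S = 1`.
Transposing turns `X` into `μ(-k)ᴴ μ(-k) - 1`, and the intertwining relation
`μ(-k) (μ(-k)ᴴ μ(-k) - 1) = (μ(-k) μ(-k)ᴴ - 1) μ(-k)` passes to every power and hence to the
series, which gives `βᵀ = β(-k)`.
-/

open Matrix

attribute [local instance] Matrix.linftyOpNormedRing Matrix.linftyOpNormedAlgebra

theorem Ring.choose_neg_one {R : Type*} [Ring R] [BinomialRing R] (n : ℕ) :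
    Ring.choose (-1 : R) n = (-1) ^ n := by
  rw [Ring.choose_neg, add_sub_cancel_left, Ring.choose_natCast, Nat.choose_self, Nat.cast_one,
    Units.smul_def, zsmul_one, Int.cast_negOnePow_natCast]

theorem Ring.choose_succ_right_eq {K : Type*} [Field K] [CharZero K] (r : K) (n : ℕ) :
    Ring.choose r (n + 1) = Ring.choose r n * (r - n) / (n + 1) := by
  have h := Ring.choose_smul_choose r (Nat.le_add_right n 1)
  rw [Nat.choose_succ_self_right, Nat.add_sub_cancel_left, Ring.choose_one_right,
    nsmul_eq_mul] at h
  rw [← h]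
  push_cast
  field_simp

theorem abs_choose_neg_half_le_one (n : ℕ) : |Ring.choose (-(1/2) : ℝ) n| ≤ 1 := by
  induction n with
  | zero => simp
  | succ n ih =>
    have hfactor : |(-(1/2) - n : ℝ) / (n + 1)| ≤ 1 := by
      rw [abs_div, abs_of_pos (by positivity : (0 : ℝ) < n + 1), div_le_one (by positivity),
        abs_le]
      constructor <;> linarith [(n.cast_nonneg : (0 : ℝ) ≤ n)]
    rw [Ring.choose_succ_right_eq, mul_div_assoc, abs_mul]
    exact mul_le_one₀ ih (abs_nonneg _) hfactor

/-- The binomial series of `(1 + x) ^ (-1/2)`; it is `0` where the series diverges. -/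
noncomputable def invSqrtOneAdd {A : Type*} [Ring A] [Algebra ℝ A] [TopologicalSpace A]
    (x : A) : A :=
  ∑' n : ℕ, Ring.choose (-(1/2) : ℝ) n • x ^ n

section TopologicalAlgebra

variable {A : Type*} [Ring A] [Algebra ℝ A] [TopologicalSpace A] [T2Space A]

theorem Commute.invSqrtOneAdd_right [IsTopologicalRing A] {a x : A} (h : Commute a x) :
    Commute a (invSqrtOneAdd x) :=
  Commute.tsum_right a fun n => (h.pow_right n).smul_right _

theorem SemiconjBy.invSqrtOneAdd [IsTopologicalRing A] {a x y : A} (h : SemiconjBy a x y)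
    (hx : Summable fun n : ℕ => Ring.choose (-(1/2) : ℝ) n • x ^ n)
    (hy : Summable fun n : ℕ => Ring.choose (-(1/2) : ℝ) n • y ^ n) :
    SemiconjBy a (invSqrtOneAdd x) (invSqrtOneAdd y) :=
  SemiconjBy.tsum_right a hx hy fun n => (h.pow_right n).smul_right _

theorem star_invSqrtOneAdd [StarRing A] [StarModule ℝ A] [ContinuousStar A] (x : A) :
    star (invSqrtOneAdd x) = invSqrtOneAdd (star x) := by
  simp only [invSqrtOneAdd, tsum_star, star_smul, star_trivial, star_pow]

theorem IsSelfAdjoint.invSqrtOneAdd [StarRing A] [StarModule ℝ A] [ContinuousStar A] {x : A}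
    (hx : IsSelfAdjoint x) : IsSelfAdjoint (invSqrtOneAdd x) := by
  rw [IsSelfAdjoint, star_invSqrtOneAdd, hx.star_eq]

end TopologicalAlgebra

section NormedAlgebra

variable {A : Type*} [NormedRing A] [NormedAlgebra ℝ A]

theorem summable_norm_choose_neg_half_smul_pow {x : A} (hx : ‖x‖ < 1) :
    Summable fun n : ℕ => ‖Ring.choose (-(1/2) : ℝ) n • x ^ n‖ :=
  (summable_norm_geometric_of_norm_lt_one hx).of_nonneg_of_le (fun _ => norm_nonneg _) fun n =>
    (norm_smul_le _ _).trans <| by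
      simpa [Real.norm_eq_abs] using
        mul_le_of_le_one_left (norm_nonneg _) (abs_choose_neg_half_le_one n)

variable [CompleteSpace A]

theorem summable_choose_neg_half_smul_pow {x : A} (hx : ‖x‖ < 1) :
    Summable fun n : ℕ => Ring.choose (-(1/2) : ℝ) n • x ^ n :=
  (summable_norm_choose_neg_half_smul_pow hx).of_norm

open Finset in
theorem invSqrtOneAdd_mul_self {x : A} (hx : ‖x‖ < 1) :
    invSqrtOneAdd x * invSqrtOneAdd x = ∑' n : ℕ, (-x) ^ n := by
  have hs := summable_norm_choose_neg_half_smul_pow hx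
  rw [invSqrtOneAdd, tsum_mul_tsum_eq_tsum_sum_antidiagonal_of_summable_norm hs hs]
  refine tsum_congr fun n => ?_
  -- Chu–Vandermonde: the coefficients of the square are those of `(1 + x) ^ (-1)`.
  have hcoeff : ∑ p ∈ antidiagonal n,
      Ring.choose (-(1/2) : ℝ) p.1 * Ring.choose (-(1/2) : ℝ) p.2 = (-1) ^ n := by
    rw [← Ring.add_choose_eq n (Commute.all _ _), ← Ring.choose_neg_one]
    norm_num
  calc ∑ p ∈ antidiagonal n,
        (Ring.choose (-(1/2) : ℝ) p.1 • x ^ p.1) * (Ring.choose (-(1/2) : ℝ) p.2 • x ^ p.2)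
      = ∑ p ∈ antidiagonal n,
          (Ring.choose (-(1/2) : ℝ) p.1 * Ring.choose (-(1/2) : ℝ) p.2) • x ^ n := by
        refine sum_congr rfl fun p hp => ?_
        rw [smul_mul_smul_comm, ← pow_add, mem_antidiagonal.mp hp]
    _ = (-x) ^ n := by rw [← sum_smul, hcoeff, ← smul_pow, neg_one_smul]

theorem invSqrtOneAdd_mul_self_mul_one_add {x : A} (hx : ‖x‖ < 1) :
    invSqrtOneAdd x * invSqrtOneAdd x * (1 + x) = 1 := by
  rw [invSqrtOneAdd_mul_self hx, ← sub_neg_eq_add]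
  exact geom_series_mul_neg (-x) (by rwa [norm_neg])

theorem invSqrtOneAdd_mul_mul_star_self [StarRing A] [StarModule ℝ A] [ContinuousStar A]
    {a : A} (ha : ‖a * star a - 1‖ < 1) :
    invSqrtOneAdd (a * star a - 1) * a * star (invSqrtOneAdd (a * star a - 1) * a) = 1 := by
  set x := a * star a - 1
  set s := invSqrtOneAdd x
  have hself : star s = s :=
    (IsSelfAdjoint.invSqrtOneAdd (by simp [x, IsSelfAdjoint, star_sub, star_mul])).star_eq
  have hx : a * star a = 1 + x := by simp [x]
  have hcomm : Commute (1 + x) s :=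
    ((Commute.one_left x).add_left (Commute.refl x)).invSqrtOneAdd_right
  calc s * a * star (s * a) = s * ((1 + x) * s) := by
        rw [star_mul, hself, ← hx]; simp only [mul_assoc]
    _ = s * s * (1 + x) := by rw [hcomm.eq, mul_assoc]
    _ = 1 := invSqrtOneAdd_mul_self_mul_one_add ha

end NormedAlgebra

section Matrix

variable {n : Type*} [Fintype n] [DecidableEq n]

theorem Matrix.transpose_invSqrtOneAdd {R : Type*} [CommRing R] [Algebra ℝ R]
    [TopologicalSpace R] [T2Space R] (X : Matrix n n R) :
    (invSqrtOneAdd X)ᵀ = invSqrtOneAdd Xᵀ := by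
  simp only [invSqrtOneAdd, transpose_tsum, transpose_smul, transpose_pow]

variable {𝕜 : Type*} [RCLike 𝕜]

theorem Matrix.transpose_invSqrtOneAdd_mul {M M' : Matrix n n 𝕜} (hM : Mᵀ = M')
    (h : ‖M * Mᴴ - 1‖ < 1) (h' : ‖M' * M'ᴴ - 1‖ < 1) :
    (invSqrtOneAdd (M * Mᴴ - 1) * M)ᵀ = invSqrtOneAdd (M' * M'ᴴ - 1) * M' := by
  have hX : (M * Mᴴ - 1)ᵀ = M'ᴴ * M' - 1 := by
    rw [transpose_sub, transpose_mul, transpose_one, hM,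
      ← conjTranspose_transpose_eq_transpose_conjTranspose, hM]
  have hsemi : SemiconjBy M' (M'ᴴ * M' - 1) (M' * M'ᴴ - 1) := by
    simp only [SemiconjBy, mul_sub, sub_mul, mul_one, one_mul, mul_assoc]
  have hsum : Summable fun k : ℕ => Ring.choose (-(1/2) : ℝ) k • (M'ᴴ * M' - 1) ^ k := by
    simpa only [transpose_smul, transpose_pow, hX] using
      (summable_choose_neg_half_smul_pow h).matrix_transpose
  rw [transpose_mul, transpose_invSqrtOneAdd, hM, hX]
  exact (hsemi.invSqrtOneAdd hsum (summable_choose_neg_half_smul_pow h')).eq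

theorem Matrix.invSqrtOneAdd_mul_mul_conjTranspose_self {M : Matrix n n 𝕜}
    (h : ‖M * Mᴴ - 1‖ < 1) :
    invSqrtOneAdd (M * Mᴴ - 1) * M * (invSqrtOneAdd (M * Mᴴ - 1) * M)ᴴ = 1 :=
  -- The `linftyOp` topology agrees with the product topology only up to unfolding instances,
  -- so the `ContinuousStar` instance has to be supplied by hand.
  @invSqrtOneAdd_mul_mul_star_self _ _ _ _ _ _ instContinuousStarMatrix _ h

end Matrix

theorem stmt_16 {N : ℕ} (μ : ℝ → Matrix (Fin N) (Fin N) ℂ) (r : ℝ) (hr : r < 1)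
    (hsym : ∀ k, (μ k)ᵀ = μ (-k))
    (hnorm : ∀ k, ‖μ k * (μ k)ᴴ - 1‖ ≤ r)
    (β : ℝ → Matrix (Fin N) (Fin N) ℂ)
    (hβ : ∀ k, β k =
      (∑' n : ℕ, (Ring.choose (-(1/2) : ℝ) n) • (μ k * (μ k)ᴴ - 1) ^ n) * μ k) :
    ∀ k : ℝ, β k * (β k)ᴴ = 1 ∧ (β k)ᵀ = β (-k) := by
  have hβ' : β = fun k => invSqrtOneAdd (μ k * (μ k)ᴴ - 1) * μ k := funext hβ
  have hlt : ∀ k, ‖μ k * (μ k)ᴴ - 1‖ < 1 := fun k => (hnorm k).trans_lt hr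
  intro k
  subst hβ'
  exact ⟨invSqrtOneAdd_mul_mul_conjTranspose_self (hlt k),
    transpose_invSqrtOneAdd_mul (hsym k) (hlt k) (hlt (-k))⟩
end

section
/- Let w : ℝ² → ℂ satisfy |w(x)| ≤ C·exp(−α‖x − γ‖) and |w′(x)| ≤ C·exp(−α‖x − γ′‖) for points γ, γ′ ∈ ℝ² and constants C < ∞, α > 0. Then for the flux function fl(γ, x, γ′) of a magnetic field with ‖B‖_∞ ≤ 1 (satisfying |fl(γ,x,γ′)| ≤ (1/2)‖γ − x‖·‖x − γ′‖), the matrix element D := ∫_{ℝ²} w′(x)·conj(w(x))·(exp(i·b·fl(γ′,x,γ)) − 1) dx satisfies |D| ≤ |b|·C′·exp(−α′‖γ − γ′‖) for some constants C′ < ∞ and 0 < α′ < α depending only on C and α. -/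
/-!
Pointwise, `|e^{iθ} - 1| ≤ |θ|` and the flux bound give an integrand at most
`C² |b| ‖x - γ'‖ ‖x - γ‖ e^{-α ‖x - γ'‖} e^{-α ‖x - γ‖} / 2`. Each polynomial factor is absorbed by
giving up a quarter of its exponential rate, and by the triangle inequality
`‖γ - γ'‖ ≤ ‖x - γ‖ + ‖x - γ'‖` half of the remaining rate yields `e^{-α ‖γ - γ'‖ / 2}`, leaving
the integrable factor `e^{-α ‖x - γ‖ / 4}`.
-/

open Real MeasureTheory

theorem mul_exp_neg_mul_le {a c : ℝ} (h : a < c) (t : ℝ) :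
    t * exp (-(c * t)) ≤ (c - a)⁻¹ * exp (-(a * t)) := by
  have hca : 0 < c - a := sub_pos.2 h
  have key : (c - a) * t * exp (-((c - a) * t)) ≤ 1 :=
    (mul_exp_neg_le_exp_neg_one _).trans (exp_le_one_iff.2 (by norm_num))
  have split : exp (-(c * t)) = exp (-((c - a) * t)) * exp (-(a * t)) := by
    rw [← exp_add]; ring_nf
  rw [split, le_inv_mul_iff₀ hca]
  calc (c - a) * (t * (exp (-((c - a) * t)) * exp (-(a * t))))
      = (c - a) * t * exp (-((c - a) * t)) * exp (-(a * t)) := by ring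
    _ ≤ 1 * exp (-(a * t)) := by gcongr
    _ = exp (-(a * t)) := one_mul _

theorem mul_exp_neg_mul_mul_le_of_le_add {α s t d : ℝ} (hα : 0 < α) (hs : 0 ≤ s) (ht : 0 ≤ t)
    (hd : d ≤ s + t) :
    t * exp (-(α * t)) * (s * exp (-(α * s))) ≤
      (4 / α) ^ 2 * exp (-(α / 2 * d)) * exp (-(α / 4 * s)) := by
  have hgap : 3 * α / 4 < α := by linarith
  have hinv : (α - 3 * α / 4)⁻¹ = 4 / α := by field_simp; ring
  have ht' := mul_exp_neg_mul_le hgap t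
  have hs' := mul_exp_neg_mul_le hgap s
  rw [hinv] at ht' hs'
  have hexp : exp (-(3 * α / 4 * t)) * exp (-(3 * α / 4 * s)) ≤
      exp (-(α / 2 * d)) * exp (-(α / 4 * s)) := by
    rw [← exp_add, ← exp_add, exp_le_exp]; nlinarith
  calc t * exp (-(α * t)) * (s * exp (-(α * s)))
      ≤ 4 / α * exp (-(3 * α / 4 * t)) * (4 / α * exp (-(3 * α / 4 * s))) := by
        gcongr
    _ = (4 / α) ^ 2 * (exp (-(3 * α / 4 * t)) * exp (-(3 * α / 4 * s))) := by ring
    _ ≤ (4 / α) ^ 2 * (exp (-(α / 2 * d)) * exp (-(α / 4 * s))) := by gcongr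
    _ = _ := by ring

theorem norm_exp_I_mul_sub_one_le_of_abs_le {b θ M : ℝ} (hθ : |θ| ≤ M) :
    ‖Complex.exp (Complex.I * b * θ) - 1‖ ≤ |b| * M := by
  have h := Real.norm_exp_I_mul_ofReal_sub_one_le (x := b * θ)
  push_cast at h
  rw [← mul_assoc, Real.norm_eq_abs, abs_mul] at h
  exact h.trans (mul_le_mul_of_nonneg_left hθ (abs_nonneg b))

theorem norm_mul_conj_mul_exp_I_sub_one_le {E : Type*} [NormedAddCommGroup E] {C α b : ℝ}
    (hα : 0 < α) {γ γ' : E} {w w' : E → ℂ} {φ : E → ℝ}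
    (hw : ∀ x, ‖w x‖ ≤ C * exp (-(α * ‖x - γ‖)))
    (hw' : ∀ x, ‖w' x‖ ≤ C * exp (-(α * ‖x - γ'‖)))
    (hφ : ∀ x, |φ x| ≤ 1 / 2 * ‖γ' - x‖ * ‖x - γ‖) (x : E) :
    ‖w' x * starRingEnd ℂ (w x) * (Complex.exp (Complex.I * b * φ x) - 1)‖ ≤
      |b| * (8 * C ^ 2 / α ^ 2) * exp (-(α / 2 * ‖γ - γ'‖)) * exp (-(α / 4 * ‖x - γ‖)) := by
  set s := ‖x - γ‖
  set t := ‖x - γ'‖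
  have hd : ‖γ - γ'‖ ≤ s + t := by
    simpa only [norm_sub_rev γ x] using norm_sub_le_norm_sub_add_norm_sub γ x γ'
  have hphase : ‖Complex.exp (Complex.I * b * φ x) - 1‖ ≤ |b| * (1 / 2 * (t * s)) :=
    norm_exp_I_mul_sub_one_le_of_abs_le <| by
      simpa only [norm_sub_rev γ' x, mul_assoc] using hφ x
  have hC : 0 ≤ C := nonneg_of_mul_nonneg_left ((norm_nonneg _).trans (hw x)) (exp_pos _)
  calc ‖w' x * starRingEnd ℂ (w x) * (Complex.exp (Complex.I * b * φ x) - 1)‖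
      = ‖w' x‖ * ‖w x‖ * ‖Complex.exp (Complex.I * b * φ x) - 1‖ := by
        rw [norm_mul, norm_mul, Complex.norm_conj]
    _ ≤ C * exp (-(α * t)) * (C * exp (-(α * s))) * (|b| * (1 / 2 * (t * s))) := by
        gcongr
        exacts [hw' x, hw x]
    _ = |b| * C ^ 2 / 2 * (t * exp (-(α * t)) * (s * exp (-(α * s)))) := by ring
    _ ≤ |b| * C ^ 2 / 2 * ((4 / α) ^ 2 * exp (-(α / 2 * ‖γ - γ'‖)) * exp (-(α / 4 * s))) :=
        mul_le_mul_of_nonneg_left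
          (mul_exp_neg_mul_mul_le_of_le_add hα (norm_nonneg _) (norm_nonneg _) hd) (by positivity)
    _ = _ := by field_simp; ring

section

variable {E : Type*} [NormedAddCommGroup E] [NormedSpace ℝ E] [FiniteDimensional ℝ E]
  [MeasurableSpace E] [BorelSpace E] [Nontrivial E] (μ : Measure E) [μ.IsAddHaarMeasure]

theorem integrable_exp_neg_mul_norm {c : ℝ} (hc : 0 < c) :
    Integrable (fun x : E => exp (-(c * ‖x‖))) μ := by
  rw [integrable_fun_norm_addHaar μ (f := fun t => exp (-(c * t)))]
  have hdim : (-1 : ℝ) < (Module.finrank ℝ E - 1 : ℕ) := by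
    linarith [(Nat.cast_nonneg _ : (0 : ℝ) ≤ (Module.finrank ℝ E - 1 : ℕ))]
  refine (integrableOn_rpow_mul_exp_neg_mul_rpow hdim one_pos hc).congr_fun
    (fun y _ => ?_) measurableSet_Ioi
  simp [Real.rpow_natCast]

theorem norm_integral_mul_conj_mul_exp_I_sub_one_le {C α b : ℝ} (hα : 0 < α) {γ γ' : E}
    {w w' : E → ℂ} {φ : E → ℝ}
    (hw : ∀ x, ‖w x‖ ≤ C * exp (-(α * ‖x - γ‖)))
    (hw' : ∀ x, ‖w' x‖ ≤ C * exp (-(α * ‖x - γ'‖)))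
    (hφ : ∀ x, |φ x| ≤ 1 / 2 * ‖γ' - x‖ * ‖x - γ‖) :
    ‖∫ x, w' x * starRingEnd ℂ (w x) * (Complex.exp (Complex.I * b * φ x) - 1) ∂μ‖ ≤
      |b| * (8 * C ^ 2 / α ^ 2 * ∫ x, exp (-(α / 4 * ‖x‖)) ∂μ) *
        exp (-(α / 2 * ‖γ - γ'‖)) := by
  set K := |b| * (8 * C ^ 2 / α ^ 2) * exp (-(α / 2 * ‖γ - γ'‖))
  have hdecay : Integrable (fun x => K * exp (-(α / 4 * ‖x - γ‖))) μ :=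
    ((integrable_exp_neg_mul_norm μ (by positivity)).comp_sub_right γ).const_mul K
  calc _ ≤ ∫ x, K * exp (-(α / 4 * ‖x - γ‖)) ∂μ :=
        norm_integral_le_of_norm_le hdecay
          (.of_forall (norm_mul_conj_mul_exp_I_sub_one_le hα hw hw' hφ))
    _ = K * ∫ x, exp (-(α / 4 * ‖x‖)) ∂μ := by
        rw [integral_const_mul, integral_sub_right_eq_self (fun x => exp (-(α / 4 * ‖x‖)))]
    _ = _ := by ring

end

theorem stmt_18_general (C α : ℝ) (hα : 0 < α) :
    ∃ (C' α' : ℝ), 0 < C' ∧ 0 < α' ∧ α' < α ∧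
      ∀ (w w' : EuclideanSpace ℝ (Fin 2) → ℂ)
        (γ γ' : EuclideanSpace ℝ (Fin 2))
        (fl : EuclideanSpace ℝ (Fin 2) → EuclideanSpace ℝ (Fin 2) →
          EuclideanSpace ℝ (Fin 2) → ℝ) (b : ℝ),
        Measurable w → Measurable w' →
        (∀ x, ‖w x‖ ≤ C * Real.exp (-(α * ‖x - γ‖))) →
        (∀ x, ‖w' x‖ ≤ C * Real.exp (-(α * ‖x - γ'‖))) →
        (∀ a x c, |fl a x c| ≤ (1/2) * ‖a - x‖ * ‖x - c‖) →
        Measurable (fun x => fl γ' x γ) →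
        ‖∫ x : EuclideanSpace ℝ (Fin 2),
            w' x * (starRingEnd ℂ) (w x) *
              (Complex.exp (Complex.I * b * (fl γ' x γ)) - 1)‖ ≤
          |b| * C' * Real.exp (-(α' * ‖γ - γ'‖)) := by
  set J := ∫ x : EuclideanSpace ℝ (Fin 2), exp (-(α / 4 * ‖x‖))
  have hJ : 0 ≤ J := integral_nonneg fun x => (exp_pos _).le
  refine ⟨8 * C ^ 2 / α ^ 2 * J + 1, α / 2, by positivity, by positivity, by linarith, ?_⟩
  intro w w' γ γ' fl b _ _ hw hw' hfl _
  calc _ ≤ |b| * (8 * C ^ 2 / α ^ 2 * J) * exp (-(α / 2 * ‖γ - γ'‖)) :=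
        norm_integral_mul_conj_mul_exp_I_sub_one_le volume hα hw hw' fun x => hfl γ' x γ
    _ ≤ _ := by gcongr; linarith

theorem stmt_18 (C α : ℝ) (hC : 0 < C) (hα : 0 < α) :
    ∃ (C' α' : ℝ), 0 < C' ∧ 0 < α' ∧ α' < α ∧
      ∀ (w w' : EuclideanSpace ℝ (Fin 2) → ℂ)
        (γ γ' : EuclideanSpace ℝ (Fin 2))
        (fl : EuclideanSpace ℝ (Fin 2) → EuclideanSpace ℝ (Fin 2) →
          EuclideanSpace ℝ (Fin 2) → ℝ) (b : ℝ),
        Measurable w → Measurable w' →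
        (∀ x, ‖w x‖ ≤ C * Real.exp (-(α * ‖x - γ‖))) →
        (∀ x, ‖w' x‖ ≤ C * Real.exp (-(α * ‖x - γ'‖))) →
        (∀ a x c, |fl a x c| ≤ (1/2) * ‖a - x‖ * ‖x - c‖) →
        Measurable (fun x => fl γ' x γ) →
        ‖∫ x : EuclideanSpace ℝ (Fin 2),
            w' x * (starRingEnd ℂ) (w x) *
              (Complex.exp (Complex.I * b * (fl γ' x γ)) - 1)‖ ≤
          |b| * C' * Real.exp (-(α' * ‖γ - γ'‖)) :=
  stmt_18_general C α hα
end
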